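/- arXiv:1010.3783 — 4 statements merged into one kernel-verified Lean document; each statement's English description precedes it below -/
import Mathlib

section
/- For every γ > 0 there exists B₀ such that the following holds for every even integer B ≥ B₀. Let σ be a probability mass function on Fin B, let τ be a probability mass function on pair-selections, and let (s,t) be drawn from the product distribution σ × τ. Then the following three conditions cannot hold simultaneously: (i) Pr[s ∈ T(t)] ≤ 1/42; (ii) the conditional entropy H(s | t), computed under σ × τ conditioned on the event s ∉ T(t), is at least (1 − γ)·log₂ B; (iii) the conditional entropy H(t | s), computed under σ × τ conditioned on the event s ∉ T(t), is at least B/2 − (1/840)·B^{1−7γ}. -/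
/-!
Conditioning on `s ∉ T(t)` distorts the law of `(s, t)` by a factor at most `42/41`.
Since `H(t | s) ≤ H(t) ≤ ∑ₖ H(tₖ)`, condition (iii) leaves fewer than `B^(1-7γ)/2` pairs `k`
whose bit `tₖ` is not `2/5`-balanced. An element of a balanced pair lies in `T(t)` with
probability at least `(41/42)(2/5)`, so by (i) the conditioned `s` puts mass at least `13/14` on
the at most `B^(1-7γ)` elements of unbalanced pairs. Hence
`H(s | t) ≤ H(s) ≤ (13/14)(1-7γ) log₂ B + (1/14) log₂ B + 4 = (1 - 13γ/2) log₂ B + 4`,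
contradicting (ii) as soon as `γ log₂ B ≥ 1`.
-/

open Finset

/-- `memT t x` : the element `x ∈ Fin B` belongs to the set `T(t)` determined by the
pair-selection `t : Fin (B/2) → Bool`, namely `T(t) = { 2k + (if t k then 1 else 0) }`. -/
def memT {B : ℕ} (t : Fin (B / 2) → Bool) (x : Fin B) : Prop :=
  ∃ k : Fin (B / 2), (x : ℕ) = 2 * (k : ℕ) + (if t k then 1 else 0)

instance {B : ℕ} (t : Fin (B / 2) → Bool) (x : Fin B) : Decidable (memT t x) := by
  unfold memT; infer_instance

/-- The probability that `s ∈ T(t)` when `(s,t)` is drawn from the product `σ × τ`. -/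
noncomputable def prHit {B : ℕ} (σ : Fin B → ℝ) (τ : (Fin (B / 2) → Bool) → ℝ) : ℝ :=
  ∑ x : Fin B, ∑ t : Fin (B / 2) → Bool, if memT t x then σ x * τ t else 0

/-- The joint distribution `σ × τ` conditioned on the event `s ∉ T(t)`. -/
noncomputable def condJoint {B : ℕ} (σ : Fin B → ℝ) (τ : (Fin (B / 2) → Bool) → ℝ)
    (x : Fin B) (t : Fin (B / 2) → Bool) : ℝ :=
  (if memT t x then 0 else σ x * τ t) /
    ∑ x' : Fin B, ∑ t' : Fin (B / 2) → Bool, if memT t' x' then 0 else σ x' * τ t'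

/-- `H(s | t)`, in bits, under `σ × τ` conditioned on `s ∉ T(t)`:
`H(s | t) = ∑_t Pr[t] · H(s | t = t) = ∑_t ∑_x −p(x,t) · log₂ (p(x,t)/p(t))`. -/
noncomputable def condEntS {B : ℕ} (σ : Fin B → ℝ) (τ : (Fin (B / 2) → Bool) → ℝ) : ℝ :=
  ∑ t : Fin (B / 2) → Bool, ∑ x : Fin B,
    -(condJoint σ τ x t) *
      Real.logb 2 (condJoint σ τ x t / ∑ x' : Fin B, condJoint σ τ x' t)

/-- `H(t | s)`, in bits, under `σ × τ` conditioned on `s ∉ T(t)`. -/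
noncomputable def condEntT {B : ℕ} (σ : Fin B → ℝ) (τ : (Fin (B / 2) → Bool) → ℝ) : ℝ :=
  ∑ x : Fin B, ∑ t : Fin (B / 2) → Bool,
    -(condJoint σ τ x t) *
      Real.logb 2 (condJoint σ τ x t / ∑ t' : Fin (B / 2) → Bool, condJoint σ τ x t')

open Real

theorem mul_log_div_le {a b c : ℝ} (ha : 0 ≤ a) (hb : 0 ≤ b) (hab : 0 < a → 0 < b)
    (hc : 0 < c) :
    a * log (b / a) ≤ a * log c + b / c - a := by
  rcases ha.eq_or_lt with rfl | ha
  · simpa using div_nonneg hb hc.le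
  have hb := hab ha
  have hsplit : log (b / a) = log c + log (b / (a * c)) := by
    rw [← log_mul hc.ne' (by positivity)]
    congr 1
    field_simp
  have hlog := log_le_sub_one_of_pos (show 0 < b / (a * c) by positivity)
  have hmul : a * (b / (a * c)) = b / c := by field_simp
  rw [hsplit, mul_add]
  nlinarith

/-- The log-sum inequality. -/
theorem sum_neg_mul_logb_div_le {ι : Type*} (F : Finset ι) {a b : ι → ℝ}
    (ha : ∀ i ∈ F, 0 ≤ a i) (hb : ∀ i ∈ F, 0 ≤ b i)
    (hab : ∀ i ∈ F, 0 < a i → 0 < b i) :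
    ∑ i ∈ F, -a i * logb 2 (a i / b i) ≤
      (∑ i ∈ F, a i) * logb 2 ((∑ i ∈ F, b i) / ∑ i ∈ F, a i) := by
  have hterm : ∀ i, -a i * logb 2 (a i / b i) = a i * log (b i / a i) / log 2 := by
    intro i
    rw [← inv_div, logb, log_inv]
    ring
  rw [sum_congr rfl fun i _ => hterm i, logb, mul_div_assoc', ← sum_div]
  gcongr
  set A := ∑ i ∈ F, a i
  set Bs := ∑ i ∈ F, b i
  rcases (sum_nonneg ha : 0 ≤ A).eq_or_lt with hA | hA
  · have hzero := (sum_eq_zero_iff_of_nonneg ha).1 hA.symm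
    rw [show A = 0 from hA.symm, zero_mul]
    exact (sum_eq_zero fun i hi => by rw [hzero i hi, zero_mul]).le
  have hBs : 0 < Bs := by
    obtain ⟨i, hi, hai⟩ := exists_lt_of_sum_lt (by simpa using hA : ∑ i ∈ F, (0 : ℝ) < A)
    exact (hab i hi hai).trans_le (single_le_sum hb hi)
  calc ∑ i ∈ F, a i * log (b i / a i)
      ≤ ∑ i ∈ F, (a i * log (Bs / A) + b i / (Bs / A) - a i) :=
        sum_le_sum fun i hi => mul_log_div_le (ha i hi) (hb i hi) (hab i hi) (by positivity)
    _ = A * log (Bs / A) := by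
        simp only [sum_sub_distrib, sum_add_distrib, ← sum_mul, ← sum_div]
        field_simp
        ring

noncomputable def shannon {α : Type*} [Fintype α] (p : α → ℝ) : ℝ :=
  ∑ a, p a * logb 2 (p a)⁻¹

/-- `H(b | a)` in bits for a joint mass function `f a b`. -/
noncomputable def condEntropy {α β : Type*} [Fintype α] [Fintype β] (f : α → β → ℝ) :
    ℝ :=
  ∑ a, ∑ b, -f a b * logb 2 (f a b / ∑ b', f a b')

theorem condEntropy_le_shannon {α β : Type*} [Fintype α] [Fintype β] {f : α → β → ℝ}
    (hf : ∀ a b, 0 ≤ f a b) (hf1 : ∑ a, ∑ b, f a b = 1) :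
    condEntropy f ≤ shannon fun b => ∑ a, f a b := by
  unfold condEntropy shannon
  rw [sum_comm]
  refine sum_le_sum fun b _ => ?_
  have h := sum_neg_mul_logb_div_le univ (a := fun a => f a b) (b := fun a => ∑ b', f a b')
    (fun a _ => hf a b) (fun a _ => sum_nonneg fun b' _ => hf a b')
    (fun a _ hab => hab.trans_le (single_le_sum (fun b' _ => hf a b') (mem_univ b)))
  rwa [hf1, one_div] at h

section marginal

variable {ι β : Type*} [Fintype ι] [DecidableEq ι] [Fintype β] [DecidableEq β]

def marginal (q : (ι → β) → ℝ) (k : ι) (b : β) : ℝ :=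
  ∑ t with t k = b, q t

theorem marginal_nonneg {q : (ι → β) → ℝ} (hq : ∀ t, 0 ≤ q t) (k : ι) (b : β) :
    0 ≤ marginal q k b :=
  sum_nonneg fun t _ => hq t

theorem sum_marginal (q : (ι → β) → ℝ) (k : ι) : ∑ b, marginal q k b = ∑ t, q t := by
  unfold marginal
  exact sum_fiberwise univ (fun t => t k) q

theorem le_marginal {q : (ι → β) → ℝ} (hq : ∀ t, 0 ≤ q t) (t : ι → β) (k : ι) :
    q t ≤ marginal q k (t k) :=
  single_le_sum (fun t' _ => hq t') (by simp)

theorem sum_mul_logb_inv_marginal (q : (ι → β) → ℝ) (k : ι) :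
    ∑ t, q t * logb 2 (marginal q k (t k))⁻¹ = shannon (marginal q k) := by
  rw [← sum_fiberwise univ (fun t => t k)]
  refine sum_congr rfl fun b _ => ?_
  rw [sum_congr rfl fun t ht => by rw [(mem_filter.1 ht).2], ← sum_mul]
  rfl

theorem shannon_le_sum_shannon_marginal {q : (ι → β) → ℝ} (hq : ∀ t, 0 ≤ q t)
    (hq1 : ∑ t, q t = 1) :
    shannon q ≤ ∑ k, shannon (marginal q k) := by
  set Q : (ι → β) → ℝ := fun t => ∏ k, marginal q k (t k)
  have hQ1 : ∑ t, Q t = 1 := by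
    rw [← Fintype.prod_sum]
    exact prod_eq_one fun k _ => (sum_marginal q k).trans hq1
  have hQpos : ∀ t, 0 < q t → 0 < Q t := fun t ht =>
    prod_pos fun k _ => ht.trans_le (le_marginal hq t k)
  have hsplit : ∀ t, q t * logb 2 (q t)⁻¹ =
      -q t * logb 2 (q t / Q t) + ∑ k, q t * logb 2 (marginal q k (t k))⁻¹ := by
    intro t
    rcases (hq t).eq_or_lt with ht | ht
    · simp [← ht]
    have hm : ∀ k, marginal q k (t k) ≠ 0 := fun k => (ht.trans_le (le_marginal hq t k)).ne'
    rw [logb_div ht.ne' (hQpos t ht).ne', logb_prod _ _ fun k _ => hm k]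
    simp only [logb_inv, ← mul_sum, sum_neg_distrib]
    ring
  have hgibbs := sum_neg_mul_logb_div_le univ (fun t _ => hq t)
    (fun t _ => prod_nonneg fun k _ => marginal_nonneg hq k (t k)) (fun t _ => hQpos t)
  rw [hq1, hQ1, div_one, logb_one, mul_zero] at hgibbs
  calc shannon q
      = ∑ t, -q t * logb 2 (q t / Q t) +
          ∑ k, ∑ t, q t * logb 2 (marginal q k (t k))⁻¹ := by
        rw [shannon, sum_congr rfl fun t _ => hsplit t, sum_add_distrib, sum_comm (s := univ)]
    _ ≤ ∑ k, shannon (marginal q k) := by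
        simp only [sum_mul_logb_inv_marginal]
        linarith

end marginal

theorem mul_logb_inv_le_two {x : ℝ} (hx : 0 ≤ x) : x * logb 2 x⁻¹ ≤ 2 := by
  have hlog2 : 1 / 2 < log 2 := by linarith [log_two_gt_d9]
  have h := negMulLog_le_one_sub_self hx
  rw [negMulLog, neg_mul, ← mul_neg, ← log_inv] at h
  rw [logb, mul_div_assoc', div_le_iff₀ (by linarith)]
  nlinarith

theorem logb_two_natCast_le_logb_two_natCast {m n : ℕ} (h : m ≤ n) :
    logb 2 (m : ℝ) ≤ logb 2 (n : ℝ) := by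
  rcases m.eq_zero_or_pos with rfl | hm
  · simpa [logb] using div_nonneg (log_natCast_nonneg n) (log_nonneg one_le_two)
  · exact logb_le_logb_of_le one_lt_two (by positivity) (by exact_mod_cast h)

theorem sum_mul_logb_inv_le {ι : Type*} (F : Finset ι) {p : ι → ℝ}
    (hp : ∀ i ∈ F, 0 ≤ p i) :
    ∑ i ∈ F, p i * logb 2 (p i)⁻¹ ≤ (∑ i ∈ F, p i) * logb 2 (#F : ℝ) + 2 := by
  have hterm : ∀ i, p i * logb 2 (p i)⁻¹ = -p i * logb 2 (p i / 1) := by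
    intro i
    rw [div_one, logb_inv]
    ring
  rcases (sum_nonneg hp).eq_or_lt with hA | hA
  · have hzero := (sum_eq_zero_iff_of_nonneg hp).1 hA.symm
    rw [← hA, zero_mul, zero_add]
    exact (sum_eq_zero fun i hi => by rw [hzero i hi, zero_mul]).trans_le zero_le_two
  have hF : (0 : ℝ) < #F := by
    obtain ⟨i, hi, -⟩ :=
      exists_lt_of_sum_lt (by simpa using hA : ∑ i ∈ F, (0 : ℝ) < ∑ i ∈ F, p i)
    exact_mod_cast card_pos.2 ⟨i, hi⟩
  have h := sum_neg_mul_logb_div_le F (b := fun _ => 1) hp (fun _ _ => zero_le_one)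
    (fun _ _ _ => one_pos)
  rw [sum_const, nsmul_one, logb_div hF.ne' hA.ne', ← sum_congr rfl fun i _ => hterm i] at h
  have hA2 := mul_logb_inv_le_two hA.le
  rw [logb_inv] at hA2
  linarith

theorem shannon_le_of_sum_compl_le {α : Type*} [Fintype α] [DecidableEq α] {p : α → ℝ}
    (hp : ∀ a, 0 ≤ p a) (hp1 : ∑ a, p a = 1) {S : Finset α} {β M : ℝ}
    (hβ : ∑ a ∈ Sᶜ, p a ≤ β) (hβ1 : β < 1) (hSM : (#S : ℝ) ≤ M)
    (hM : M ≤ Fintype.card α) :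
    shannon p ≤ (1 - β) * logb 2 M + β * logb 2 (Fintype.card α) + 4 := by
  have hS : S.Nonempty := by
    by_contra hS
    rw [not_nonempty_iff_eq_empty.1 hS, compl_empty] at hβ
    linarith
  have hSM' : logb 2 (#S : ℝ) ≤ logb 2 M :=
    logb_le_logb_of_le one_lt_two (by exact_mod_cast hS.card_pos) hSM
  have hMα : logb 2 M ≤ logb 2 (Fintype.card α) :=
    logb_le_logb_of_le one_lt_two (by linarith [(Nat.one_le_cast (α := ℝ)).2 hS.card_pos]) hM
  set c := ∑ a ∈ Sᶜ, p a
  have hc : 0 ≤ c := sum_nonneg fun a _ => hp a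
  have hSsum : ∑ a ∈ S, p a = 1 - c := by linarith [sum_add_sum_compl S p]
  have hSent := sum_mul_logb_inv_le S fun a _ => hp a
  have hScent := sum_mul_logb_inv_le Sᶜ fun a _ => hp a
  rw [hSsum] at hSent
  have hSc : c * logb 2 (#Sᶜ : ℝ) ≤ c * logb 2 (Fintype.card α) :=
    mul_le_mul_of_nonneg_left (logb_two_natCast_le_logb_two_natCast (card_le_univ _)) hc
  have hS0 := mul_le_mul_of_nonneg_left hSM' (by linarith : 0 ≤ 1 - c)
  have hshift := mul_nonpos_of_nonneg_of_nonpos (sub_nonneg.2 hβ) (sub_nonpos.2 hMα)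
  rw [shannon, ← sum_add_sum_compl S]
  linarith

theorem shannon_bool_eq {r : Bool → ℝ} (hr : r true + r false = 1) :
    shannon r = binEntropy (r true) / log 2 := by
  rw [shannon, Fintype.sum_bool, binEntropy, ← eq_sub_of_add_eq' hr]
  simp only [logb]
  ring

theorem shannon_bool_le_one {r : Bool → ℝ} (hr : r true + r false = 1) : shannon r ≤ 1 := by
  rw [shannon_bool_eq hr, div_le_one (log_pos one_lt_two)]
  exact binEntropy_le_log_two

/-- `H(2/5) ≈ 0.971` bits; in exponential form, `5 ^ 50 ≤ 2 ^ 69 * 3 ^ 30`. -/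
theorem binEntropy_two_fifths_le : binEntropy (2 / 5) ≤ 49 / 50 * log 2 := by
  have hpow : 50 * log 5 ≤ 69 * log 2 + 30 * log 3 := by
    have h := log_le_log (by positivity) (show (5 : ℝ) ^ 50 ≤ 2 ^ 69 * 3 ^ 30 by norm_num)
    rwa [log_mul (by positivity) (by positivity), log_pow, log_pow, log_pow] at h
  have h5 : log (5 / 2) = log 5 - log 2 := log_div (by norm_num) (by norm_num)
  have h3 : log (5 / 3) = log 5 - log 3 := log_div (by norm_num) (by norm_num)
  rw [binEntropy]
  norm_num [h5, h3]
  linarith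

theorem shannon_bool_le_of_lt {r : Bool → ℝ} (hr0 : ∀ b, 0 ≤ r b)
    (hr : r true + r false = 1) {b : Bool} (hb : r b < 2 / 5) : shannon r ≤ 49 / 50 := by
  have hH : binEntropy (r b) ≤ binEntropy (2 / 5) :=
    binEntropy_strictMonoOn.monotoneOn ⟨hr0 b, by linarith⟩ ⟨by norm_num, by norm_num⟩ hb.le
  have hsymm : binEntropy (r b) = binEntropy (r true) := by
    cases b
    · rw [eq_sub_of_add_eq hr, binEntropy_one_sub]
    · rfl
  rw [shannon_bool_eq hr, div_le_iff₀ (log_pos one_lt_two)]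
  linarith [binEntropy_two_fifths_le]

theorem card_unbalanced_le {ι : Type*} [Fintype ι] [DecidableEq ι] {q : (ι → Bool) → ℝ}
    (hq : ∀ t, 0 ≤ q t) (hq1 : ∑ t, q t = 1) :
    (#{k | ∃ b, marginal q k b < 2 / 5} : ℝ) ≤ 50 * (Fintype.card ι - shannon q) := by
  have hm1 : ∀ k, marginal q k true + marginal q k false = 1 := fun k => by
    rw [← Fintype.sum_bool, sum_marginal, hq1]
  have hdeficit : ∀ k ∈ ({k | ∃ b, marginal q k b < 2 / 5} : Finset ι),
      1 / 50 ≤ 1 - shannon (marginal q k) := fun k hk => by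
    obtain ⟨b, hb⟩ := (mem_filter.1 hk).2
    linarith [shannon_bool_le_of_lt (marginal_nonneg hq k) (hm1 k) hb]
  have hsum := (card_nsmul_le_sum _ _ _ hdeficit).trans
    (sum_le_sum_of_subset_of_nonneg (subset_univ _)
      fun k _ _ => sub_nonneg.2 (shannon_bool_le_one (hm1 k)))
  rw [nsmul_eq_mul, sum_sub_distrib, sum_const, card_univ, nsmul_one] at hsum
  linarith [shannon_le_sum_shannon_marginal hq hq1]

section selection

variable {B : ℕ}

noncomputable def prMiss (σ : Fin B → ℝ) (τ : (Fin (B / 2) → Bool) → ℝ) : ℝ :=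
  ∑ x : Fin B, ∑ t : Fin (B / 2) → Bool, if memT t x then 0 else σ x * τ t

noncomputable def hitProb (τ : (Fin (B / 2) → Bool) → ℝ) (x : Fin B) : ℝ :=
  ∑ t : Fin (B / 2) → Bool, if memT t x then τ t else 0

def pairOf (hB : 2 ∣ B) (x : Fin B) : Fin (B / 2) :=
  ⟨x / 2, by omega⟩

def parity (x : Fin B) : Bool :=
  decide ((x : ℕ) % 2 = 1)

theorem memT_iff (hB : 2 ∣ B) (t : Fin (B / 2) → Bool) (x : Fin B) :
    memT t x ↔ t (pairOf hB x) = parity x := by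
  constructor
  · rintro ⟨k, hk⟩
    obtain rfl : k = pairOf hB x := by
      ext
      simp only [pairOf]
      split at hk <;> omega
    cases h : t (pairOf hB x) <;> rw [h] at hk <;> simp [pairOf, parity] at hk ⊢ <;> omega
  · intro h
    refine ⟨pairOf hB x, ?_⟩
    cases h' : t (pairOf hB x) <;> rw [h'] at h <;> simp [pairOf, parity] at h ⊢ <;> omega

theorem card_filter_pairOf_mem_le (hB : 2 ∣ B) (K : Finset (Fin (B / 2))) :
    #{x | pairOf hB x ∈ K} ≤ 2 * #K := by
  calc #{x | pairOf hB x ∈ K}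
      ≤ #(K ×ˢ (univ : Finset Bool)) := by
        refine card_le_card_of_injOn (fun x => (pairOf hB x, parity x)) ?_ ?_
        · intro x hx
          simpa using hx
        · intro x _ y _ hxy
          simp only [Prod.mk.injEq, pairOf, parity, Fin.mk.injEq, decide_eq_decide] at hxy
          ext
          omega
    _ = 2 * #K := by rw [card_product, card_univ, Fintype.card_bool, mul_comm]

noncomputable def condLawS (σ : Fin B → ℝ) (τ : (Fin (B / 2) → Bool) → ℝ) (x : Fin B) :
    ℝ :=
  ∑ t, condJoint σ τ x t

noncomputable def condLawT (σ : Fin B → ℝ) (τ : (Fin (B / 2) → Bool) → ℝ)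
    (t : Fin (B / 2) → Bool) : ℝ :=
  ∑ x, condJoint σ τ x t

noncomputable def unbalancedPairs (σ : Fin B → ℝ) (τ : (Fin (B / 2) → Bool) → ℝ) :
    Finset (Fin (B / 2)) :=
  {k | ∃ b, marginal (condLawT σ τ) k b < 2 / 5}

noncomputable def unbalancedElems (hB : 2 ∣ B) (σ : Fin B → ℝ)
    (τ : (Fin (B / 2) → Bool) → ℝ) : Finset (Fin B) :=
  {x | pairOf hB x ∈ unbalancedPairs σ τ}

variable {σ : Fin B → ℝ} {τ : (Fin (B / 2) → Bool) → ℝ}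

theorem prHit_add_prMiss (hσ1 : ∑ x, σ x = 1) (hτ1 : ∑ t, τ t = 1) :
    prHit σ τ + prMiss σ τ = 1 := by
  simp only [prHit, prMiss, ← sum_add_distrib, ite_add_ite, add_zero, zero_add, ite_self,
    ← mul_sum, hτ1, mul_one, hσ1]

theorem prHit_eq_sum_mul_hitProb : prHit σ τ = ∑ x, σ x * hitProb τ x := by
  simp only [prHit, hitProb, mul_sum, mul_ite, mul_zero]

theorem hitProb_nonneg (hτ : ∀ t, 0 ≤ τ t) (x : Fin B) : 0 ≤ hitProb τ x :=
  sum_nonneg fun t _ => by split_ifs <;> simp [hτ t]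

theorem condJoint_nonneg (hσ : ∀ x, 0 ≤ σ x) (hτ : ∀ t, 0 ≤ τ t) (x : Fin B)
    (t : Fin (B / 2) → Bool) : 0 ≤ condJoint σ τ x t := by
  have hterm : ∀ x t, 0 ≤ if memT t x then 0 else σ x * τ t := fun x t => by
    split_ifs
    exacts [le_rfl, mul_nonneg (hσ x) (hτ t)]
  exact div_nonneg (hterm x t) (sum_nonneg fun x _ => sum_nonneg fun t _ => hterm x t)

theorem sum_sum_condJoint (h : prMiss σ τ ≠ 0) : ∑ x, ∑ t, condJoint σ τ x t = 1 := by
  simp only [condJoint, ← sum_div]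
  exact div_self h

theorem condLawS_nonneg (hσ : ∀ x, 0 ≤ σ x) (hτ : ∀ t, 0 ≤ τ t) (x : Fin B) :
    0 ≤ condLawS σ τ x :=
  sum_nonneg fun t _ => condJoint_nonneg hσ hτ x t

theorem condLawT_nonneg (hσ : ∀ x, 0 ≤ σ x) (hτ : ∀ t, 0 ≤ τ t)
    (t : Fin (B / 2) → Bool) :
    0 ≤ condLawT σ τ t :=
  sum_nonneg fun x _ => condJoint_nonneg hσ hτ x t

theorem sum_condLawS (h : prMiss σ τ ≠ 0) : ∑ x, condLawS σ τ x = 1 :=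
  sum_sum_condJoint h

theorem sum_condLawT (h : prMiss σ τ ≠ 0) : ∑ t, condLawT σ τ t = 1 := by
  unfold condLawT
  rw [sum_comm]
  exact sum_sum_condJoint h

theorem condEntS_le_shannon (hσ : ∀ x, 0 ≤ σ x) (hτ : ∀ t, 0 ≤ τ t)
    (h : prMiss σ τ ≠ 0) :
    condEntS σ τ ≤ shannon (condLawS σ τ) :=
  condEntropy_le_shannon (f := fun t x => condJoint σ τ x t)
    (fun t x => condJoint_nonneg hσ hτ x t)
    (by rw [sum_comm]; exact sum_sum_condJoint h)

theorem condEntT_le_shannon (hσ : ∀ x, 0 ≤ σ x) (hτ : ∀ t, 0 ≤ τ t)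
    (h : prMiss σ τ ≠ 0) :
    condEntT σ τ ≤ shannon (condLawT σ τ) :=
  condEntropy_le_shannon (condJoint_nonneg hσ hτ) (sum_sum_condJoint h)

theorem prMiss_mul_condJoint (h : prMiss σ τ ≠ 0) (x : Fin B) (t : Fin (B / 2) → Bool) :
    prMiss σ τ * condJoint σ τ x t = if memT t x then 0 else σ x * τ t :=
  mul_div_cancel₀ _ h

theorem prMiss_mul_condLawS_le (hτ : ∀ t, 0 ≤ τ t) (hτ1 : ∑ t, τ t = 1)
    (h : prMiss σ τ ≠ 0) {x : Fin B} (hx : 0 ≤ σ x) :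
    prMiss σ τ * condLawS σ τ x ≤ σ x := by
  rw [condLawS, mul_sum]
  calc ∑ t, prMiss σ τ * condJoint σ τ x t ≤ ∑ t, σ x * τ t := by
        refine sum_le_sum fun t _ => ?_
        rw [prMiss_mul_condJoint h]
        split_ifs
        exacts [mul_nonneg hx (hτ t), le_rfl]
    _ = σ x := by rw [← mul_sum, hτ1, mul_one]

theorem prMiss_mul_condLawT_le (hσ : ∀ x, 0 ≤ σ x) (hσ1 : ∑ x, σ x = 1)
    (h : prMiss σ τ ≠ 0) {t : Fin (B / 2) → Bool} (ht : 0 ≤ τ t) :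
    prMiss σ τ * condLawT σ τ t ≤ τ t := by
  rw [condLawT, mul_sum]
  calc ∑ x, prMiss σ τ * condJoint σ τ x t ≤ ∑ x, σ x * τ t := by
        refine sum_le_sum fun x _ => ?_
        rw [prMiss_mul_condJoint h]
        split_ifs
        exacts [mul_nonneg (hσ x) ht, le_rfl]
    _ = τ t := by rw [← sum_mul, hσ1, one_mul]

theorem prMiss_mul_marginal_le_hitProb (hB : 2 ∣ B) (hσ : ∀ x, 0 ≤ σ x)
    (hσ1 : ∑ x, σ x = 1) (hτ : ∀ t, 0 ≤ τ t) (h : prMiss σ τ ≠ 0) (x : Fin B) :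
    prMiss σ τ * marginal (condLawT σ τ) (pairOf hB x) (parity x) ≤ hitProb τ x := by
  rw [marginal, mul_sum, hitProb, ← sum_filter]
  simp only [memT_iff hB]
  exact sum_le_sum fun t _ => prMiss_mul_condLawT_le hσ hσ1 h (hτ t)

theorem card_unbalancedElems_le (hB : 2 ∣ B) (hσ : ∀ x, 0 ≤ σ x) (hτ : ∀ t, 0 ≤ τ t)
    (h : prMiss σ τ ≠ 0) :
    (#(unbalancedElems hB σ τ) : ℝ) ≤ 100 * ((B : ℝ) / 2 - condEntT σ τ) := by
  have hpairs : (#(unbalancedElems hB σ τ) : ℝ) ≤ 2 * #(unbalancedPairs σ τ) := by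
    exact_mod_cast card_filter_pairOf_mem_le hB _
  have hbad : (#(unbalancedPairs σ τ) : ℝ) ≤
      50 * (Fintype.card (Fin (B / 2)) - shannon (condLawT σ τ)) :=
    card_unbalanced_le (condLawT_nonneg hσ hτ) (sum_condLawT h)
  rw [Fintype.card_fin, Nat.cast_div hB two_ne_zero, Nat.cast_two] at hbad
  linarith [condEntT_le_shannon hσ hτ h]

/-- An element of a `2/5`-balanced pair is hit with probability at least `(41/42)(2/5)`, so
these elements carry conditioned mass at most `(1/42)(5/2)(42/41)^2 < 1/14`. -/
theorem sum_compl_unbalancedElems_condLawS_le (hB : 2 ∣ B) (hσ : ∀ x, 0 ≤ σ x)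
    (hσ1 : ∑ x, σ x = 1) (hτ : ∀ t, 0 ≤ τ t) (hτ1 : ∑ t, τ t = 1)
    (hHit : prHit σ τ ≤ 1 / 42) :
    ∑ x ∈ (unbalancedElems hB σ τ)ᶜ, condLawS σ τ x ≤ 1 / 14 := by
  set G := (unbalancedElems hB σ τ)ᶜ
  set Z := prMiss σ τ
  have hZ : 41 / 42 ≤ Z := by linarith [prHit_add_prMiss hσ1 hτ1]
  have hZ0 : Z ≠ 0 := by positivity
  have hbalanced : ∀ x ∈ G, 2 / 5 ≤ marginal (condLawT σ τ) (pairOf hB x) (parity x) := by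
    intro x hx
    simp only [G, unbalancedElems, unbalancedPairs, mem_compl, mem_filter, mem_univ, true_and,
      not_exists, not_lt] at hx
    exact hx _
  have hmass : Z * ∑ x ∈ G, condLawS σ τ x ≤ ∑ x ∈ G, σ x := by
    rw [mul_sum]
    exact sum_le_sum fun x _ => prMiss_mul_condLawS_le hτ hτ1 hZ0 (hσ x)
  have hhit : Z * (2 / 5) * ∑ x ∈ G, σ x ≤ 1 / 42 := by
    rw [mul_sum]
    calc ∑ x ∈ G, Z * (2 / 5) * σ x
        ≤ ∑ x ∈ G, σ x * hitProb τ x := sum_le_sum fun x hx => by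
          rw [mul_comm]
          refine mul_le_mul_of_nonneg_left ?_ (hσ x)
          exact (mul_le_mul_of_nonneg_left (hbalanced x hx) (by positivity)).trans
            (prMiss_mul_marginal_le_hitProb hB hσ hσ1 hτ hZ0 x)
      _ ≤ ∑ x, σ x * hitProb τ x := sum_le_sum_of_subset_of_nonneg (subset_univ G)
          fun x _ _ => mul_nonneg (hσ x) (hitProb_nonneg hτ x)
      _ ≤ 1 / 42 := prHit_eq_sum_mul_hitProb ▸ hHit
  have hZZ :
      (41 / 42) ^ 2 * ∑ x ∈ G, condLawS σ τ x ≤ Z * Z * ∑ x ∈ G, condLawS σ τ x :=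
    mul_le_mul_of_nonneg_right (by nlinarith) (sum_nonneg fun x _ => condLawS_nonneg hσ hτ x)
  linarith [mul_le_mul_of_nonneg_left hmass (by positivity : 0 ≤ Z * (2 / 5))]

end selection

theorem one_le_mul_logb_two {γ x : ℝ} (hγ : 0 < γ) (hx : (2 : ℝ) ^ γ⁻¹ ≤ x) :
    1 ≤ γ * logb 2 x := by
  have h := (le_logb_iff_rpow_le one_lt_two ((rpow_pos_of_pos two_pos _).trans_le hx)).2 hx
  rwa [inv_le_iff_one_le_mul₀' hγ] at h

theorem stmt0 (γ : ℝ) (hγ : 0 < γ) :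
    ∃ B₀ : ℕ, ∀ B : ℕ, B₀ ≤ B → 2 ∣ B →
      ∀ σ : Fin B → ℝ, (∀ x, 0 ≤ σ x) → (∑ x, σ x) = 1 →
      ∀ τ : (Fin (B / 2) → Bool) → ℝ, (∀ t, 0 ≤ τ t) → (∑ t, τ t) = 1 →
      ¬ (prHit σ τ ≤ 1 / 42 ∧
         (1 - γ) * Real.logb 2 (B : ℝ) ≤ condEntS σ τ ∧
         (B : ℝ) / 2 - (1 / 840) * (B : ℝ) ^ ((1 : ℝ) - 7 * γ) ≤ condEntT σ τ) := by
  refine ⟨⌈(2 : ℝ) ^ γ⁻¹⌉₊,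
    fun B hB hB2 σ hσ hσ1 τ hτ hτ1 ⟨hHit, hentS, hentT⟩ => ?_⟩
  have hB2γ : (2 : ℝ) ^ γ⁻¹ ≤ B := (Nat.le_ceil _).trans (by exact_mod_cast hB)
  have hB1 : (1 : ℝ) ≤ B := (one_le_rpow one_le_two (inv_nonneg.2 hγ.le)).trans hB2γ
  have hZ : prMiss σ τ ≠ 0 := by linarith [prHit_add_prMiss hσ1 hτ1]
  have hSM : (#(unbalancedElems hB2 σ τ) : ℝ) ≤ (B : ℝ) ^ (1 - 7 * γ) := by
    linarith [card_unbalancedElems_le hB2 hσ hτ hZ,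
      rpow_nonneg (zero_le_one.trans hB1) (1 - 7 * γ)]
  have hent := hentS.trans <| (condEntS_le_shannon hσ hτ hZ).trans <|
    shannon_le_of_sum_compl_le (condLawS_nonneg hσ hτ) (sum_condLawS hZ)
      (sum_compl_unbalancedElems_condLawS_le hB2 hσ hσ1 hτ hτ1 hHit) (by norm_num) hSM
      (by simpa using rpow_le_self_of_one_le hB1 (by linarith : 1 - 7 * γ ≤ 1))
  rw [Fintype.card_fin, logb_rpow_eq_mul_logb_of_pos (zero_lt_one.trans_le hB1)] at hent
  linarith [one_le_mul_logb_two hγ hB2γ]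
end

section
/- Let B be an even positive integer and γ > 0. Let σ be a probability mass function on Fin B, let S* = { x ∈ Fin B : σ(x) ≤ B^{7γ−1} }, and assume σ(S*) ≥ 1/5. Let t be drawn uniformly at random from all 2^{B/2} pair-selections, and define f*(t) = Σ_{x ∈ T(t) ∩ S*} σ(x). Then Pr[ f*(t) < 1/20 ] ≤ exp( −B^{1−7γ}/80 ). (Equivalently, the number of pair-selections t with f*(t) < 1/20 is at most 2^{B/2}·exp(−B^{1−7γ}/80).) -/
open Finset

/-- `f*(t) = ∑_{x ∈ T(t) ∩ S*} σ(x)`, where `S* = { x : σ x ≤ c }`. -/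
noncomputable def fstar {B : ℕ} (σ : Fin B → ℝ) (c : ℝ) (t : Fin (B / 2) → Bool) : ℝ :=
  ∑ x : Fin B, if memT t x ∧ σ x ≤ c then σ x else 0

/-!
Exponential moment method. Writing `x = 2k + b`, `f*(t) = ∑ₖ gₖ(tₖ)` with
`gₖ(b) = σ(2k + b)·[σ(2k + b) ≤ c] ∈ [0, c]`, `c = B^(7γ-1)`; for `s = log 2 / c`, Markov's
inequality and independence of the coordinates give
`#{f* < 1/20} ≤ e^(s/20) ∏ₖ (e^(-s gₖ(0)) + e^(-s gₖ(1)))`. On `[0, c]` the convex function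
`e^(-s x)` lies below its chord `1 - x/(2c)`, so each factor is at most
`2 e^(-(gₖ(0) + gₖ(1))/(4c))`, and `σ(S*) ≥ 1/5` makes the exponent at most
`(log 2 - 1)/(20c) ≤ -1/(80c)`.
-/

open Real

section Pairs

variable {B : ℕ} (hB : 2 ∣ B)

def pairEquiv : Fin (B / 2) × Bool ≃ Fin B :=
  ((Equiv.refl _).prodCongr finTwoEquiv.symm).trans
    (finProdFinEquiv.trans (finCongr (Nat.div_mul_cancel hB)))

theorem pairEquiv_apply_val (k : Fin (B / 2)) (b : Bool) :
    (pairEquiv hB (k, b) : ℕ) = 2 * k + if b then 1 else 0 := by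
  cases b <;> simp [pairEquiv, finProdFinEquiv, finTwoEquiv, add_comm, mul_comm]

theorem memT_iff_exists_pairEquiv (t : Fin (B / 2) → Bool) (x : Fin B) :
    memT t x ↔ ∃ k, x = pairEquiv hB (k, t k) := by
  simp only [memT, Fin.ext_iff, pairEquiv_apply_val]

theorem memT_pairEquiv_iff (t : Fin (B / 2) → Bool) (k : Fin (B / 2)) (b : Bool) :
    memT t (pairEquiv hB (k, b)) ↔ t k = b := by
  simp [memT_iff_exists_pairEquiv hB, eq_comm (b := b)]

theorem sum_memT_eq {M : Type*} [AddCommMonoid M] (t : Fin (B / 2) → Bool) (f : Fin B → M) :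
    ∑ x, (if memT t x then f x else 0) = ∑ k, f (pairEquiv hB (k, t k)) := by
  rw [← (pairEquiv hB).sum_comp, Fintype.sum_prod_type]
  simp [memT_pairEquiv_iff hB]

end Pairs

theorem exp_neg_log_two_mul_le {x : ℝ} (hx0 : 0 ≤ x) (hx1 : x ≤ 1) :
    exp (-(log 2 * x)) ≤ 1 - x / 2 := by
  have h := rpow_one_add_le_one_add_mul_self (s := -1 / 2) (by norm_num) hx0 hx1
  rw [rpow_def_of_pos (by norm_num)] at h
  convert h using 2
  · rw [show (1 : ℝ) + -1 / 2 = 2⁻¹ by norm_num, log_inv]; ring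
  · ring

theorem sum_exp_neg_log_two_mul_le {α : Type*} [Fintype α] [Nonempty α] (x : α → ℝ)
    (hx0 : ∀ b, 0 ≤ x b) (hx1 : ∀ b, x b ≤ 1) :
    ∑ b, exp (-(log 2 * x b)) ≤ Fintype.card α * exp (-(∑ b, x b) / (2 * Fintype.card α)) := by
  have hα : (0 : ℝ) < Fintype.card α := by exact_mod_cast Fintype.card_pos
  calc ∑ b, exp (-(log 2 * x b))
      ≤ ∑ b, (1 - x b / 2) := sum_le_sum fun b _ => exp_neg_log_two_mul_le (hx0 b) (hx1 b)
    _ = Fintype.card α * (-(∑ b, x b) / (2 * Fintype.card α) + 1) := by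
      rw [sum_sub_distrib, ← sum_div, sum_const, card_univ, nsmul_one]
      field_simp
      ring
    _ ≤ Fintype.card α * exp (-(∑ b, x b) / (2 * Fintype.card α)) := by
      gcongr; exact add_one_le_exp _

theorem card_filter_lt_le_sum_exp {Ω : Type*} [Fintype Ω] (F : Ω → ℝ) {s : ℝ} (hs : 0 ≤ s)
    (a : ℝ) : (#{ω | F ω < a} : ℝ) ≤ ∑ ω, exp (s * (a - F ω)) := by
  rw [card_eq_sum_ones, Nat.cast_sum, Nat.cast_one, sum_filter]
  refine sum_le_sum fun ω _ => ?_
  split_ifs with h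
  · exact one_le_exp (mul_nonneg hs (by linarith))
  · exact (exp_pos _).le

theorem card_filter_sum_lt_le {ι α : Type*} [Fintype ι] [DecidableEq ι] [Fintype α] [Nonempty α]
    (g : ι → α → ℝ) {c : ℝ} (hc : 0 < c) (hg0 : ∀ k b, 0 ≤ g k b) (hgc : ∀ k b, g k b ≤ c)
    (a : ℝ) :
    (#{t : ι → α | ∑ k, g k (t k) < a} : ℝ) ≤
      (Fintype.card α : ℝ) ^ Fintype.card ι *
        exp ((log 2 * a - (∑ k, ∑ b, g k b) / (2 * Fintype.card α)) / c) := by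
  have hfactor : ∀ t : ι → α, exp (log 2 / c * (a - ∑ k, g k (t k))) =
      exp (log 2 * a / c) * ∏ k, exp (-(log 2 * (g k (t k) / c))) := by
    intro t
    rw [← exp_sum, ← exp_add, sum_neg_distrib, ← mul_sum, ← sum_div]
    congr 1
    ring
  calc (#{t : ι → α | ∑ k, g k (t k) < a} : ℝ)
      ≤ ∑ t : ι → α, exp (log 2 / c * (a - ∑ k, g k (t k))) :=
        card_filter_lt_le_sum_exp _ (div_nonneg (log_nonneg one_le_two) hc.le) a
    _ = exp (log 2 * a / c) * ∏ k, ∑ b, exp (-(log 2 * (g k b / c))) := by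
      simp_rw [hfactor, ← mul_sum, Fintype.prod_sum]
    _ ≤ exp (log 2 * a / c) *
          ∏ k, Fintype.card α * exp (-(∑ b, g k b / c) / (2 * Fintype.card α)) := by
      gcongr with k
      exact sum_exp_neg_log_two_mul_le _ (fun b => div_nonneg (hg0 k b) hc.le)
        (fun b => (div_le_one hc).2 (hgc k b))
    _ = _ := by
      rw [prod_mul_distrib, prod_const, card_univ, ← exp_sum, mul_left_comm, ← exp_add]
      congr 2
      simp only [← sum_div, sum_neg_distrib]
      ring

theorem stmt3_general (B : ℕ) (hB : 0 < B) (hBe : 2 ∣ B) (γ : ℝ)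
    (σ : Fin B → ℝ) (hσ0 : ∀ x, 0 ≤ σ x)
    -- σ assigns mass at least 1/5 to S* = { x : σ x ≤ B^(7γ−1) }
    (hmass : 1 / 5 ≤ ∑ x : Fin B, if σ x ≤ (B : ℝ) ^ (7 * γ - 1) then σ x else 0) :
    (((univ.filter fun t : Fin (B / 2) → Bool =>
          fstar σ ((B : ℝ) ^ (7 * γ - 1)) t < 1 / 20).card : ℝ)) ≤
      2 ^ (B / 2) * Real.exp (-(B : ℝ) ^ ((1 : ℝ) - 7 * γ) / 80) := by
  set c := (B : ℝ) ^ (7 * γ - 1)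
  have hc : 0 < c := rpow_pos_of_pos (Nat.cast_pos.2 hB) _
  set g : Fin (B / 2) → Bool → ℝ := fun k b =>
    if σ (pairEquiv hBe (k, b)) ≤ c then σ (pairEquiv hBe (k, b)) else 0
  have hfstar (t : Fin (B / 2) → Bool) : fstar σ c t = ∑ k, g k (t k) := by
    simp only [fstar, ite_and]
    exact sum_memT_eq hBe t _
  have hmass_pairs : 1 / 5 ≤ ∑ k, ∑ b, g k b := by
    rwa [← (pairEquiv hBe).sum_comp, Fintype.sum_prod_type] at hmass
  have hcinv : (B : ℝ) ^ ((1 : ℝ) - 7 * γ) = c⁻¹ := by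
    rw [← rpow_neg (Nat.cast_nonneg B), neg_sub]
  simp_rw [hfstar, hcinv]
  refine (card_filter_sum_lt_le g hc (fun k b => ?_) (fun k b => ?_) (1 / 20)).trans ?_
  · dsimp only [g]; split_ifs <;> simp [hσ0]
  · dsimp only [g]; split_ifs <;> linarith
  · simp only [Fintype.card_bool, Fintype.card_fin, Nat.cast_ofNat]
    gcongr 2 ^ _ * exp ?_
    rw [show -c⁻¹ / 80 = -1 / 80 / c by ring, div_le_div_iff_of_pos_right hc]
    linarith [log_two_lt_d9]

theorem stmt3 (B : ℕ) (hB : 0 < B) (hBe : 2 ∣ B) (γ : ℝ) (hγ : 0 < γ)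
    (σ : Fin B → ℝ) (hσ0 : ∀ x, 0 ≤ σ x) (hσ1 : (∑ x, σ x) = 1)
    -- σ assigns mass at least 1/5 to S* = { x : σ x ≤ B^(7γ−1) }
    (hmass : 1 / 5 ≤ ∑ x : Fin B, if σ x ≤ (B : ℝ) ^ (7 * γ - 1) then σ x else 0) :
    (((univ.filter fun t : Fin (B / 2) → Bool =>
          fstar σ ((B : ℝ) ^ (7 * γ - 1)) t < 1 / 20).card : ℝ)) ≤
      2 ^ (B / 2) * Real.exp (-(B : ℝ) ^ ((1 : ℝ) - 7 * γ) / 80) :=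
  stmt3_general B hB hBe γ σ hσ0 hmass
end

section
/- Let N, B, b be positive integers and let φ : Fin B → (Fin b → Bool) be an injective map such that all strings φ(y) have the same Hamming weight. Fix s : Fin N → Fin B and define the query string q : Fin N → Fin b → Bool by q i = φ(s i). For each (x,y) ∈ Fin N × Fin B define the database string D(x,y) : Fin N → Fin b → Bool by D(x,y) i j = (i = x ∧ φ(y) j). Then for every set T ⊆ Fin N × Fin B: there exists (x,y) ∈ T such that q dominates D(x,y) (i.e., for all i, j, D(x,y) i j = true implies q i j = true) if and only if there exists i ∈ Fin N with (i, s i) ∈ T. -/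
open Finset

/-- The database string `D(x,y)`: it has the codeword `φ(y)` in block `x`
and zeros everywhere else, i.e. `D(x,y) i j = (i = x ∧ φ(y) j)`. -/
def Dstr {N B b : ℕ} (φ : Fin B → Fin b → Bool) (x : Fin N) (y : Fin B)
    (i : Fin N) (j : Fin b) : Bool :=
  decide (i = x) && φ y j

/-- `u` dominates `v`: every position where `v` is true, `u` is also true. -/
def Dominates {N b : ℕ} (u v : Fin N → Fin b → Bool) : Prop :=
  ∀ i j, v i j = true → u i j = true

theorem stmt7 (N B b : ℕ) (hN : 0 < N) (hB : 0 < B) (hb : 0 < b)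
    (φ : Fin B → Fin b → Bool) (hφ : Function.Injective φ)
    (w : ℕ) (hw : ∀ y : Fin B, (univ.filter fun j => φ y j = true).card = w)
    (s : Fin N → Fin B) (T : Finset (Fin N × Fin B)) :
    (∃ p ∈ T, Dominates (fun i => φ (s i)) (Dstr φ p.1 p.2))
      ↔ ∃ i : Fin N, (i, s i) ∈ T := by
  constructor
  · rintro ⟨⟨x, y⟩, hpT, hdom⟩
    have hsub : (univ.filter fun j => φ y j = true) ⊆
        (univ.filter fun j => φ (s x) j = true) := by
      intro j hj
      simp only [mem_filter, mem_univ, true_and] at hj ⊢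
      have := hdom x j (by simp [Dstr, hj])
      exact this
    have heq : (univ.filter fun j => φ y j = true) =
        (univ.filter fun j => φ (s x) j = true) :=
      eq_of_subset_of_card_le hsub (by rw [hw, hw])
    have hyx : y = s x := by
      apply hφ
      funext j
      have := Finset.ext_iff.mp heq j
      simp only [mem_filter, mem_univ, true_and] at this
      cases h1 : φ y j <;> cases h2 : φ (s x) j <;> simp_all
    exact ⟨x, hyx ▸ hpT⟩
  · rintro ⟨i, hi⟩
    refine ⟨(i, s i), hi, fun i' j h => ?_⟩
    simp only [Dstr, Bool.and_eq_true, decide_eq_true_eq] at h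
    obtain ⟨rfl, h⟩ := h
    exact h
end

section
/- Let b ≥ 2 and d ≥ 1, let G be the butterfly graph of degree b and depth d, let H be a subset of its edges, and let M be the set of edges of G not in H. For each edge e ∈ M from (i−1, u) to (i, u′), define the axis-parallel rectangle R(e) = [α(e)·b^{i−1}, (α(e)+1)·b^{i−1}) × [β(e)·b^{d−i}, (β(e)+1)·b^{d−i}), where α(e) = Σ_{j=i}^{d} u(j)·b^{j−i} and β(e) = Σ_{j=1}^{i} u′(j)·b^{i−j}. Then for all v, w ∈ [b]^d, the sink (d, w) is reachable from the source (0, v) using only edges of H if and only if the point (src(v), snk(w)) lies in none of the rectangles R(e) for e ∈ M. -/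
open Finset

/-- Vertices of the butterfly of degree `b` and depth `d`: a level in `{0,…,d}`
together with a vector in `[b]^d` (coordinates `1,…,d` are indexed by `Fin d`). -/
abbrev BVtx (b d : ℕ) := Fin (d + 1) × (Fin d → Fin b)

/-- The edge relation of the butterfly: an edge goes from level `i−1` to level `i`
(`0`-indexed: from level `p.1` to level `p.1 + 1`) and may change only the
coordinate whose (`0`-indexed) index equals the level of the tail. -/
def bEdge (b d : ℕ) (p q : BVtx b d) : Prop :=
  (q.1 : ℕ) = (p.1 : ℕ) + 1 ∧ ∀ j : Fin d, (j : ℕ) ≠ (p.1 : ℕ) → p.2 j = q.2 j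

/-- The mixed vector `m_i(v,w)`: its first `i` coordinates come from `w` and the
remaining ones from `v` (`0`-indexed: coordinate `j` is `w j` iff `j < i`). -/
def mix {b d : ℕ} (v w : Fin d → Fin b) (i : ℕ) : Fin d → Fin b :=
  fun j => if (j : ℕ) < i then w j else v j

/-- Encoding of a source vector: `src(v) = ∑_j v(j)·b^(j−1)` (`0`-indexed: `b^j`). -/
def srcEnc {b d : ℕ} (v : Fin d → Fin b) : ℕ :=
  ∑ j : Fin d, (v j : ℕ) * b ^ (j : ℕ)

/-- Encoding of a sink vector: `snk(w) = ∑_j w(j)·b^(d−j)` (`0`-indexed: `b^(d−1−j)`). -/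
def snkEnc {b d : ℕ} (w : Fin d → Fin b) : ℕ :=
  ∑ j : Fin d, (w j : ℕ) * b ^ (d - 1 - (j : ℕ))

/-- `α = ∑_{j ≥ i} u(j)·b^(j−i)` over the coordinates `j ≥ i` (`0`-indexed). -/
def alphaE {b d : ℕ} (i : ℕ) (u : Fin d → Fin b) : ℕ :=
  ∑ j ∈ univ.filter (fun j : Fin d => i ≤ (j : ℕ)), (u j : ℕ) * b ^ ((j : ℕ) - i)

/-- `β = ∑_{j ≤ i} u′(j)·b^(i−j)` over the coordinates `j ≤ i` (`0`-indexed). -/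
def betaE {b d : ℕ} (i : ℕ) (u' : Fin d → Fin b) : ℕ :=
  ∑ j ∈ univ.filter (fun j : Fin d => (j : ℕ) ≤ i), (u' j : ℕ) * b ^ (i - (j : ℕ))


/-!
A source `(0, v)` reaches a sink `(d, w)` along exactly one path of the butterfly: its vertex at
level `k` is `(k, mix v w k)`, since coordinates below the current level can no longer change and
those at or above it have not changed yet. So `(d, w)` is reachable within `H` iff each of these
`d` edges lies in `H`. An edge `e` at level `i` lies on this path iff its tail agrees with `v`
in the coordinates `≥ i` and its head agrees with `w` in the coordinates `≤ i`. Reading base-`b`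
digits, the first condition says `src v / b^i = α(e)`, and since `snk w = src (w ∘ rev)` the
second says `snk w / b^(d-1-i) = β(e)`: together, `(src v, snk w) ∈ R(e)`.
-/

section Encoding

variable {b d : ℕ}

lemma Nat.mem_Ico_mul_iff_div_eq {k x y : ℕ} (hk : 0 < k) :
    x ∈ Set.Ico (y * k) ((y + 1) * k) ↔ x / k = y := by
  rw [Set.mem_Ico, Nat.div_eq_iff hk, add_mul, one_mul]
  omega

lemma finFunctionFinEquiv_div_pow {n i : ℕ} (hi : i ≤ n) (f : Fin n → Fin b) :
    (finFunctionFinEquiv f : ℕ) / b ^ i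
      = finFunctionFinEquiv (fun t : Fin (n - i) => f ⟨i + t, by omega⟩) := by
  obtain rfl | hb := b.eq_zero_or_pos
  · cases n with
    | zero => obtain rfl := Nat.le_zero.1 hi; simp
    | succ n => exact (f 0).elim0
  have hlt : (finFunctionFinEquiv f : ℕ) / b ^ i < b ^ (n - i) := by
    rw [Nat.div_lt_iff_lt_mul (by positivity), ← pow_add, Nat.sub_add_cancel hi]
    exact (finFunctionFinEquiv f).isLt
  rw [← Fin.val_mk hlt, ← finFunctionFinEquiv.apply_symm_apply ⟨_, hlt⟩]
  congr
  funext t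
  ext
  conv_rhs => rw [← finFunctionFinEquiv.symm_apply_apply f]
  simp only [finFunctionFinEquiv_symm_apply_val, Nat.div_div_eq_div_mul, ← pow_add]

lemma alphaE_eq_finFunctionFinEquiv {i : ℕ} (hi : i ≤ d) (u : Fin d → Fin b) :
    alphaE i u = finFunctionFinEquiv (fun t : Fin (d - i) => u ⟨i + t, by omega⟩) := by
  rw [finFunctionFinEquiv_apply, alphaE]
  refine Finset.sum_bij' (fun j hj => ⟨j - i, by simp at hj; omega⟩)
    (fun t _ => ⟨i + t, by omega⟩) ?_ ?_ ?_ ?_ ?_ <;>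
    simp +contextual

lemma srcEnc_div_pow {i : ℕ} (hi : i ≤ d) (v : Fin d → Fin b) :
    srcEnc v / b ^ i = alphaE i v := by
  rw [alphaE_eq_finFunctionFinEquiv hi, ← finFunctionFinEquiv_div_pow hi]
  rfl

lemma alphaE_inj_iff {i : ℕ} (hi : i ≤ d) (u u' : Fin d → Fin b) :
    alphaE i u = alphaE i u' ↔ ∀ j : Fin d, i ≤ j → u j = u' j := by
  rw [alphaE_eq_finFunctionFinEquiv hi, alphaE_eq_finFunctionFinEquiv hi, Fin.val_inj,
    finFunctionFinEquiv.apply_eq_iff_eq, funext_iff]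
  constructor
  · intro h j hj
    simpa [Nat.add_sub_cancel' hj] using h ⟨j - i, by omega⟩
  · intro h t
    exact h _ (Nat.le_add_right i t)

lemma srcEnc_mem_Ico_iff {i : ℕ} (hi : i < d) (u v : Fin d → Fin b) :
    srcEnc v ∈ Set.Ico (alphaE i u * b ^ i) ((alphaE i u + 1) * b ^ i)
      ↔ ∀ j : Fin d, i ≤ j → v j = u j := by
  have hb : 0 < b ^ i := pow_pos (v ⟨i, hi⟩).pos i
  rw [Nat.mem_Ico_mul_iff_div_eq hb, srcEnc_div_pow hi.le, alphaE_inj_iff hi.le]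

lemma snkEnc_eq_srcEnc_comp_rev (w : Fin d → Fin b) : snkEnc w = srcEnc (w ∘ Fin.rev) := by
  refine Fintype.sum_equiv Fin.revPerm _ _ fun j => ?_
  simp only [Fin.revPerm_apply, Function.comp_apply, Fin.rev_rev, Fin.val_rev]
  congr 2
  omega

lemma betaE_eq_alphaE_comp_rev {i : ℕ} (hi : i < d) (u : Fin d → Fin b) :
    betaE i u = alphaE (d - 1 - i) (u ∘ Fin.rev) := by
  refine Finset.sum_nbij' Fin.rev Fin.rev (fun j hj => ?_) (fun j hj => ?_) (by simp) (by simp)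
    fun j hj => ?_
  all_goals
    simp only [mem_filter, mem_univ, true_and, Fin.val_rev, Function.comp_apply, Fin.rev_rev] at *
  · omega
  · omega
  · congr 2
    omega

lemma snkEnc_mem_Ico_iff {i : ℕ} (hi : i < d) (u w : Fin d → Fin b) :
    snkEnc w ∈ Set.Ico (betaE i u * b ^ (d - 1 - i)) ((betaE i u + 1) * b ^ (d - 1 - i))
      ↔ ∀ j : Fin d, (j : ℕ) ≤ i → w j = u j := by
  rw [snkEnc_eq_srcEnc_comp_rev, betaE_eq_alphaE_comp_rev hi, srcEnc_mem_Ico_iff (by omega),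
    Fin.revPerm.forall_congr_left]
  simp only [Fin.revPerm_symm, Fin.revPerm_apply, Function.comp_apply, Fin.rev_rev, Fin.val_rev]
  exact forall_congr' fun j => imp_congr_left (by omega)

end Encoding

section Paths

open Relation

variable {b d : ℕ}

lemma mix_zero (v w : Fin d → Fin b) : mix v w 0 = v := rfl

lemma mix_of_le {i : ℕ} (hi : d ≤ i) (v w : Fin d → Fin b) : mix v w i = w :=
  funext fun j => if_pos (j.isLt.trans_le hi)

def pathVtx (v w : Fin d → Fin b) (k : Fin (d + 1)) : BVtx b d := (k, mix v w k)

def pathEdge (v w : Fin d → Fin b) (k : Fin d) : BVtx b d × BVtx b d :=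
  (pathVtx v w k.castSucc, pathVtx v w k.succ)

lemma bEdge_pathEdge (v w : Fin d → Fin b) (k : Fin d) :
    bEdge b d (pathEdge v w k).1 (pathEdge v w k).2 := by
  refine ⟨by simp [pathEdge, pathVtx], fun j hj => ?_⟩
  simp only [pathEdge, pathVtx, mix, Fin.val_castSucc, Fin.val_succ] at hj ⊢
  split_ifs <;> first | rfl | omega

lemma eq_pathEdge_iff {e : BVtx b d × BVtx b d} (he : bEdge b d e.1 e.2) {k : Fin d}
    (hk : (e.1.1 : ℕ) = k) (v w : Fin d → Fin b) :
    e = pathEdge v w k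
      ↔ (∀ j : Fin d, (k : ℕ) ≤ j → v j = e.1.2 j)
        ∧ (∀ j : Fin d, (j : ℕ) ≤ k → w j = e.2.2 j) := by
  obtain ⟨⟨i, x⟩, ⟨i', y⟩⟩ := e
  obtain ⟨hlev, hxy⟩ := he
  dsimp only at hk hlev hxy ⊢
  constructor
  · rintro ⟨⟩
    simp only [mix, Fin.val_castSucc, Fin.val_succ]
    exact ⟨fun j hj => by simp [not_lt.2 hj], fun j hj => by simp [Nat.lt_succ_of_le hj]⟩
  · rintro ⟨hv, hw⟩
    refine Prod.ext (Prod.ext (Fin.ext hk) (funext fun j => ?_))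
      (Prod.ext (Fin.ext (by simp [pathEdge, pathVtx, hlev, hk])) (funext fun j => ?_))
    all_goals simp only [pathEdge, pathVtx, mix, Fin.val_castSucc, Fin.val_succ]; split_ifs with hj
    · rw [hxy j (by omega), hw j (by omega)]
    · exact (hv j (by omega)).symm
    · exact (hw j (by omega)).symm
    · rw [← hxy j (by omega), hv j (by omega)]

lemma coord_eq_of_lt_level {p q : BVtx b d} (h : ReflTransGen (bEdge b d) p q)
    (j : Fin d) (hj : (j : ℕ) < p.1) : p.2 j = q.2 j := by
  induction h using ReflTransGen.head_induction_on with
  | refl => rfl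
  | head hpc _ ih => rw [hpc.2 j (by omega), ih (by rw [hpc.1]; omega)]

lemma coord_eq_of_level_le {p q : BVtx b d} (h : ReflTransGen (bEdge b d) p q)
    (j : Fin d) (hj : (q.1 : ℕ) ≤ j) : p.2 j = q.2 j := by
  induction h with
  | refl => rfl
  | tail _ hac ih => rw [ih (by rw [hac.1] at hj; omega), hac.2 j (by rw [hac.1] at hj; omega)]

lemma eq_pathVtx_of_reachable {v w : Fin d → Fin b} {a : BVtx b d}
    (h₁ : ReflTransGen (bEdge b d) (0, v) a) (h₂ : ReflTransGen (bEdge b d) a (Fin.last d, w)) :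
    a = pathVtx v w a.1 := by
  refine Prod.ext rfl (funext fun j => ?_)
  simp only [pathVtx, mix]
  split_ifs with hj
  · exact coord_eq_of_lt_level h₂ j hj
  · exact (coord_eq_of_level_le h₁ j (not_lt.1 hj)).symm

lemma exists_step_at_level {R : BVtx b d → BVtx b d → Prop}
    (hR : ∀ p q, R p q → bEdge b d p q) {p q : BVtx b d} (h : ReflTransGen R p q) {k : ℕ}
    (hpk : (p.1 : ℕ) ≤ k) (hkq : k < q.1) :
    ∃ a c, ReflTransGen R p a ∧ R a c ∧ ReflTransGen R c q ∧ (a.1 : ℕ) = k := by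
  induction h using ReflTransGen.head_induction_on with
  | refl => omega
  | @head p c hpc hcq ih =>
    obtain hpk | hpk := hpk.eq_or_lt
    · exact ⟨p, c, .refl, hpc, hcq, hpk⟩
    · obtain ⟨a, c', hca, hac', hc'q, hak⟩ := ih (by rw [(hR _ _ hpc).1]; omega)
      exact ⟨a, c', .head hpc hca, hac', hc'q, hak⟩

lemma reachable_iff_forall_pathEdge_mem {H : Set (BVtx b d × BVtx b d)} {v w : Fin d → Fin b} :
    ReflTransGen (fun p q => bEdge b d p q ∧ (p, q) ∈ H) (0, v) (Fin.last d, w)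
      ↔ ∀ k, pathEdge v w k ∈ H := by
  constructor
  · intro h k
    obtain ⟨a, c, hva, ⟨hac, hacH⟩, hcw, hak⟩ :=
      exists_step_at_level (fun _ _ h => h.1) h (k := k) (by simp) (by simp)
    have hva' := ReflTransGen.mono (fun _ _ h => h.1) _ _ hva
    have hcw' := ReflTransGen.mono (fun _ _ h => h.1) _ _ hcw
    have ha := eq_pathVtx_of_reachable hva' (hcw'.head hac)
    have hc := eq_pathVtx_of_reachable (hva'.tail hac) hcw'
    rw [show a.1 = k.castSucc from Fin.ext hak] at ha
    rw [show c.1 = k.succ from Fin.ext (by simp [hac.1, hak])] at hc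
    rwa [ha, hc] at hacH
  · intro hH
    have key :
        ∀ k, ReflTransGen (fun p q => bEdge b d p q ∧ (p, q) ∈ H) (0, v) (pathVtx v w k) :=
      Fin.induction (by rw [pathVtx, Fin.val_zero, mix_zero])
        fun k ih => ih.tail ⟨bEdge_pathEdge v w k, hH k⟩
    simpa [pathVtx, mix_of_le] using key (Fin.last d)

end Paths

lemma mem_rect_iff_eq_pathEdge {b d : ℕ} {e : BVtx b d × BVtx b d} (he : bEdge b d e.1 e.2)
    {k : Fin d} (hk : (e.1.1 : ℕ) = k) (v w : Fin d → Fin b) :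
    (alphaE (e.1.1 : ℕ) e.1.2 * b ^ (e.1.1 : ℕ) ≤ srcEnc v
        ∧ srcEnc v < (alphaE (e.1.1 : ℕ) e.1.2 + 1) * b ^ (e.1.1 : ℕ)
        ∧ betaE (e.1.1 : ℕ) e.2.2 * b ^ (d - 1 - (e.1.1 : ℕ)) ≤ snkEnc w
        ∧ snkEnc w < (betaE (e.1.1 : ℕ) e.2.2 + 1) * b ^ (d - 1 - (e.1.1 : ℕ)))
      ↔ e = pathEdge v w k := by
  rw [hk, ← and_assoc, ← Set.mem_Ico, ← Set.mem_Ico, srcEnc_mem_Ico_iff k.isLt,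
    snkEnc_mem_Ico_iff k.isLt, eq_pathEdge_iff he hk]

theorem stmt11_general (b d : ℕ)
    (H : Set (BVtx b d × BVtx b d))
    (v w : Fin d → Fin b) :
    -- (d, w) is reachable from (0, v) using only edges of H iff the point
    -- (src v, snk w) is in none of the rectangles R(e) of the missing edges e
    Relation.ReflTransGen (fun p q => bEdge b d p q ∧ (p, q) ∈ H)
        ((0 : Fin (d + 1)), v) (Fin.last d, w)
      ↔ ∀ e : BVtx b d × BVtx b d, bEdge b d e.1 e.2 → e ∉ H →
          ¬ (alphaE (e.1.1 : ℕ) e.1.2 * b ^ (e.1.1 : ℕ) ≤ srcEnc v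
              ∧ srcEnc v < (alphaE (e.1.1 : ℕ) e.1.2 + 1) * b ^ (e.1.1 : ℕ)
              ∧ betaE (e.1.1 : ℕ) e.2.2 * b ^ (d - 1 - (e.1.1 : ℕ)) ≤ snkEnc w
              ∧ snkEnc w < (betaE (e.1.1 : ℕ) e.2.2 + 1) * b ^ (d - 1 - (e.1.1 : ℕ))) := by
  rw [reachable_iff_forall_pathEdge_mem]
  constructor
  · intro h e he heH hrect
    have hk : (e.1.1 : ℕ) < d := by have := e.2.1.isLt; have := he.1; omega
    rw [mem_rect_iff_eq_pathEdge he (k := ⟨_, hk⟩) rfl] at hrect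
    exact heH (hrect ▸ h _)
  · intro h k
    by_contra hkH
    have he := bEdge_pathEdge v w k
    exact h _ he hkH ((mem_rect_iff_eq_pathEdge he rfl v w).2 rfl)

theorem stmt11 (b d : ℕ) (hb : 2 ≤ b) (hd : 1 ≤ d)
    (H : Set (BVtx b d × BVtx b d)) (hH : ∀ e ∈ H, bEdge b d e.1 e.2)
    (v w : Fin d → Fin b) :
    -- (d, w) is reachable from (0, v) using only edges of H iff the point
    -- (src v, snk w) is in none of the rectangles R(e) of the missing edges e
    Relation.ReflTransGen (fun p q => bEdge b d p q ∧ (p, q) ∈ H)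
        ((0 : Fin (d + 1)), v) (Fin.last d, w)
      ↔ ∀ e : BVtx b d × BVtx b d, bEdge b d e.1 e.2 → e ∉ H →
          ¬ (alphaE (e.1.1 : ℕ) e.1.2 * b ^ (e.1.1 : ℕ) ≤ srcEnc v
              ∧ srcEnc v < (alphaE (e.1.1 : ℕ) e.1.2 + 1) * b ^ (e.1.1 : ℕ)
              ∧ betaE (e.1.1 : ℕ) e.2.2 * b ^ (d - 1 - (e.1.1 : ℕ)) ≤ snkEnc w
              ∧ snkEnc w < (betaE (e.1.1 : ℕ) e.2.2 + 1) * b ^ (d - 1 - (e.1.1 : ℕ))) :=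
  stmt11_general b d H v w
end
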